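/- arXiv:2210.03001 — 3 statements merged into one kernel-verified Lean document; each statement's English description precedes it below -/
import Mathlib

section
/- Let Ω ⊂ ℂⁿ, n ≥ 2, be a bounded domain, q ∈ ∂Ω, and suppose there exists a neighbourhood 𝒪 of q such that 𝒪 ∩ Ω is log-type convex. Then there exist a neighbourhood W of q with W compactly contained in 𝒪 and constants c, ν > 0 such that k_Ω(w;v) ≥ c ‖v‖ (log(1/δ_Ω(w)))^{1+ν} for all w ∈ W ∩ Ω and all v ∈ ℂⁿ. -/
/-
Rescaling an analytic disc through `w` in `Ω` by a fixed factor `r / R` (Schwarz lemma, with `R`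
controlling the diameter of `Ω`) keeps it inside `closedBall w r ⊆ 𝒪`, so near `q` the Kobayashi
metric of `Ω` dominates `r / R` times that of the convex piece `𝒪 ∩ Ω`. On a convex domain, a
real hyperplane separating `M` from a point `w + ζ u` outside it turns a disc through `w` into a
holomorphic function of positive real part, and the Carathéodory inequality
`|h'(0)| ≤ 2 Re h(0)` gives `k_M(w; v) ≥ ‖v‖ / (2 δ_M(w; v))`. Log-type convexity bounds
`δ_M(w; v)` by `C / |log δ_M(w)|^(1+ν)`, and `δ_M(w) ≤ δ_Ω(w) < 1` near `q`.
-/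

/-
Common definitions for formalizing results from
"Local continuous extension of proper holomorphic maps: low-regularity and
infinite-type boundaries" (A. Banik).
-/

open Metric Set Filter MeasureTheory
open scoped Real ENNReal ComplexInnerProductSpace Topology

noncomputable section

namespace Paper

/-- `ℂⁿ` with the Euclidean (Hermitian) norm. -/
abbrev Cn (n : ℕ) := EuclideanSpace ℂ (Fin n)

variable {E : Type*} [NormedAddCommGroup E] [InnerProductSpace ℂ E]

/-- `δ_D(z)`: the Euclidean distance from `z` to the complement of `D`. -/
def delta (D : Set E) (z : E) : ℝ := Metric.infDist z Dᶜ

/-- The Kobayashi pseudometric `k_D(z; v)` of `D`. -/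
def kobMetric (D : Set E) (z v : E) : ℝ :=
  sInf {r : ℝ | ∃ α : ℂ, r = ‖α‖ ∧ ∃ f : ℂ → E,
    DifferentiableOn ℂ f (ball (0 : ℂ) 1) ∧ MapsTo f (ball (0 : ℂ) 1) D ∧
    f 0 = z ∧ α • deriv f 0 = v}

/-- The Poincaré distance on the unit disc between `0` and `σ ∈ [0,1)`,
`ρ(0,σ) = (1/2) log((1+σ)/(1-σ))`. -/
def poincare (σ : ℝ) : ℝ := (1 / 2) * Real.log ((1 + σ) / (1 - σ))

/-- The Lempert function of `D`. -/
def lempert (D : Set E) (z w : E) : ℝ :=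
  sInf {r : ℝ | ∃ σ : ℝ, 0 ≤ σ ∧ σ < 1 ∧ r = poincare σ ∧ ∃ f : ℂ → E,
    DifferentiableOn ℂ f (ball (0 : ℂ) 1) ∧ MapsTo f (ball (0 : ℂ) 1) D ∧
    f 0 = z ∧ f (σ : ℂ) = w}

/-- The Kobayashi pseudodistance `K_D`, defined via chains of analytic discs. -/
def kobDist (D : Set E) (z w : E) : ℝ :=
  sInf {r : ℝ | ∃ m : ℕ, ∃ c : ℕ → E, c 0 = z ∧ c m = w ∧ (∀ i, i ≤ m → c i ∈ D) ∧
    r = ∑ i ∈ Finset.range m, lempert D (c i) (c (i + 1))}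

/-- A real-valued function is plurisubharmonic on `D` if it is upper semicontinuous on `D`
and satisfies the sub-mean-value inequality on every circle, in every complex line,
whose corresponding closed disc lies in `D`. -/
def PlurisubharmonicOn (u : E → ℝ) (D : Set E) : Prop :=
  UpperSemicontinuousOn u D ∧
  ∀ z ∈ D, ∀ v : E, ∀ r : ℝ, 0 < r →
    (∀ ζ : ℂ, ‖ζ‖ ≤ r → z + ζ • v ∈ D) →
    u z ≤ (2 * π)⁻¹ *
      ∫ θ in (0 : ℝ)..(2 * π), u (z + ((r : ℂ) * Complex.exp ((θ : ℂ) * Complex.I)) • v)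

/-- The open right circular cone `Γ(v, θ)` with aperture `θ`, for a unit vector `v`. -/
def cone (v : E) (θ : ℝ) : Set E := {z | Real.cos (θ / 2) * ‖z‖ < ⟪z, v⟫.re}

/-- `D` satisfies a uniform interior cone condition in `W`. -/
def UnifIntCone (D W : Set E) : Prop :=
  ∀ 𝒰 : Set E, IsOpen 𝒰 → 𝒰 ⊆ D → IsCompact (closure 𝒰) → closure 𝒰 ⊆ W →
    ∃ r : ℝ, 0 < r ∧ ∃ θ : ℝ, 0 < θ ∧ θ < π ∧
      ∀ w ∈ 𝒰, ∃ ξ ∈ frontier D ∩ W, ∃ v : E, ‖v‖ = 1 ∧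
        (∃ t : ℝ, 0 < t ∧ w = ξ + t • v) ∧
        w ∈ ((ξ + ·) '' cone v θ) ∩ ball ξ r ∧
        ((ξ + ·) '' cone v θ) ∩ ball ξ r ⊆ W ∩ D

/-- `ω : [0,∞) → [0,∞)`, `ω(0) = 0`, satisfies a Dini condition. -/
def DiniFunction (ω : ℝ → ℝ) : Prop :=
  ω 0 = 0 ∧ (∀ r : ℝ, 0 ≤ r → 0 ≤ ω r) ∧ MonotoneOn ω (Ici 0) ∧
  ∃ ε : ℝ, 0 < ε ∧ IntegrableOn (fun r => ω r / r) (Ioo 0 ε)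

/-- The cluster set `C(F, p)` of `F : D → ℂⁿ` at `p`. -/
def clusterSet (F : E → E) (D : Set E) (p : E) : Set E :=
  {w | ∃ z : ℕ → E, (∀ k, z k ∈ D) ∧ Tendsto z atTop (𝓝 p) ∧ Tendsto (F ∘ z) atTop (𝓝 w)}

/-- `F : D → Ω` is a proper map. -/
def ProperOn (F : E → E) (D Ω : Set E) : Prop :=
  ∀ K : Set E, K ⊆ Ω → IsCompact K → IsCompact (F ⁻¹' K ∩ D)

/-- `δ_Ω(z; v)`: the radius of the largest disc, centred at `z` in the direction `v`,
contained in `Ω`. -/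
def dirDist (Ω : Set E) (z v : E) : ℝ :=
  sSup {r : ℝ | 0 < r ∧ ∀ ζ : ℂ, ‖ζ‖ < r → z + ζ • (‖v‖⁻¹ • v) ∈ Ω}

/-- A bounded convex domain is log-type convex (Liu–Wang). -/
def LogTypeConvex (M : Set E) : Prop :=
  Bornology.IsBounded M ∧ Convex ℝ M ∧ M.Nonempty ∧
  ∃ C : ℝ, 0 < C ∧ ∃ ν : ℝ, 0 < ν ∧ ∀ z ∈ M, ∀ v : E, v ≠ 0 →
    dirDist M z v ≤ C / |Real.log (delta M z)| ^ (1 + ν)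

/-- `η` is the unit inward normal to `∂D` at `ξ`, characterized metrically:
`δ_D(ξ + tη)/t → 1` as `t → 0⁺`. -/
def IsInwardNormalAt (D : Set E) (ξ η : E) : Prop :=
  ‖η‖ = 1 ∧ Tendsto (fun t : ℝ => delta D (ξ + t • η) / t) (𝓝[>] 0) (𝓝 1)

/-- The first `n` coordinates `Z′` of `Z ∈ ℂ^{n+1}`. -/
def sliceCoord {n : ℕ} (Z : Cn (n + 1)) : Cn n := WithLp.toLp 2 (fun i : Fin n => Z i.castSucc)

/-- The last coordinate `Z_n` of `Z ∈ ℂ^{n+1}`. -/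
def lastCoord {n : ℕ} (Z : Cn (n + 1)) : ℂ := Z (Fin.last n)

/-- The parameter box `B^{n-1}(0, r) × (-r, r)` on which the graphing functions live. -/
def box (n : ℕ) (r : ℝ) : Set (Cn n × ℝ) := ball (0 : Cn n) r ×ˢ Ioo (-r) r

/-- The Euclidean norm on `ℂⁿ × ℝ`. -/
def pnorm {n : ℕ} (x : Cn n × ℝ) : ℝ := Real.sqrt (‖x.1‖ ^ 2 + x.2 ^ 2)

/-- `{(Z', Z_n) : Im Z_n > φ(Z', Re Z_n), ‖Z'‖ < r, |Re Z_n| < r}`. -/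
def graphDom {n : ℕ} (φ : Cn n × ℝ → ℝ) (r : ℝ) : Set (Cn (n + 1)) :=
  {Z | φ (sliceCoord Z, (lastCoord Z).re) < (lastCoord Z).im ∧
       ‖sliceCoord Z‖ < r ∧ |(lastCoord Z).re| < r}

/-- `{(Z', Z_n) : Im Z_n = φ(Z', Re Z_n), ‖Z'‖ < r, |Re Z_n| < r}`. -/
def graphBd {n : ℕ} (φ : Cn n × ℝ → ℝ) (r : ℝ) : Set (Cn (n + 1)) :=
  {Z | (lastCoord Z).im = φ (sliceCoord Z, (lastCoord Z).re) ∧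
       ‖sliceCoord Z‖ < r ∧ |(lastCoord Z).re| < r}

/-- The graphing data `(N_ξ, U^ξ, r_ξ, φ_ξ)` at a boundary point `ξ`:
`U^ξ(z) = U_ξ(z - ξ)` with `U_ξ` unitary, and the local graph description of `D` and `∂D`. -/
def IsGraphChartAt {n : ℕ} (D : Set (Cn (n + 1))) (ξ : Cn (n + 1)) (N : Set (Cn (n + 1)))
    (Uu : Cn (n + 1) ≃ₗᵢ[ℂ] Cn (n + 1)) (r : ℝ) (φ : Cn n × ℝ → ℝ) : Prop :=
  IsOpen N ∧ ξ ∈ N ∧ 0 < r ∧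
  (fun z => Uu (z - ξ)) '' (N ∩ D) ⊆ graphDom φ r ∧
  (fun z => Uu (z - ξ)) '' (N ∩ frontier D) = graphBd φ r

/-- `φ` is Lipschitz on the box `B^{n-1}(0, r) × (-r, r)`. -/
def LipOnBox {n : ℕ} (φ : Cn n × ℝ → ℝ) (r : ℝ) : Prop :=
  ∃ K : ℝ, ∀ x ∈ box n r, ∀ y ∈ box n r, |φ x - φ y| ≤ K * pnorm (x - y)

/-- `φ` is `C¹` on the box with modulus of continuity `ω` for its gradient. -/
def C1ModOnBox {n : ℕ} (φ : Cn n × ℝ → ℝ) (r : ℝ) (ω : ℝ → ℝ) : Prop :=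
  (∀ x ∈ box n r, DifferentiableAt ℝ φ x) ∧
  ∀ x ∈ box n r, ∀ y ∈ box n r, ‖fderiv ℝ φ x - fderiv ℝ φ y‖ ≤ ω (pnorm (x - y))

/-- `∂D ∩ U` is a Lipschitz submanifold of `U`. -/
def IsLipschitzSubmanifold {n : ℕ} (D U : Set (Cn (n + 1))) : Prop :=
  ∀ ξ ∈ frontier D ∩ U, ∃ N Uu r φ,
    N ⊆ U ∧ IsGraphChartAt D ξ N Uu r φ ∧ LipOnBox φ r

/-- `∂D ∩ U` is a `C^{1,Dini}` submanifold of `U`. -/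
def IsC1DiniSubmanifold {n : ℕ} (D U : Set (Cn (n + 1))) : Prop :=
  ∃ ω : ℝ → ℝ, DiniFunction ω ∧
    ∀ ξ ∈ frontier D ∩ U, ∃ N Uu r φ,
      N ⊆ U ∧ IsGraphChartAt D ξ N Uu r φ ∧ C1ModOnBox φ r ω

/-- `∂D ∩ U` is a `C¹` submanifold of `U`. -/
def IsC1Submanifold {n : ℕ} (D U : Set (Cn (n + 1))) : Prop :=
  ∀ ξ ∈ frontier D ∩ U, ∃ N Uu r φ,
    N ⊆ U ∧ IsGraphChartAt D ξ N Uu r φ ∧ ContDiffOn ℝ 1 φ (box n r)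

/-- `∂D ∩ U` is a `C²` submanifold of `U`. -/
def IsC2Submanifold {n : ℕ} (D U : Set (Cn (n + 1))) : Prop :=
  ∀ ξ ∈ frontier D ∩ U, ∃ N Uu r φ,
    N ⊆ U ∧ IsGraphChartAt D ξ N Uu r φ ∧ ContDiffOn ℝ 2 φ (box n r)

/-- A `(1, κ)`-almost-geodesic for the Kobayashi distance of `M`. -/
def IsAlmostGeodesic (M : Set E) (κ a b : ℝ) (γ : ℝ → E) : Prop :=
  a ≤ b ∧ ContinuousOn γ (Icc a b) ∧ MapsTo γ (Icc a b) M ∧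
  ∀ s ∈ Icc a b, ∀ t ∈ Icc a b,
    |s - t| - κ ≤ kobDist M (γ s) (γ t) ∧ kobDist M (γ s) (γ t) ≤ |s - t| + κ

/-- The visibility property (Bracci–Nikolov–Thomas). -/
def VisibilityProperty (M : Set E) : Prop :=
  ∃ κ : ℝ, 0 < κ ∧ ∀ ξ ∈ frontier M, ∀ η ∈ frontier M, ξ ≠ η →
    ∀ Vξ Vη : Set E, IsOpen Vξ → IsOpen Vη → ξ ∈ Vξ → η ∈ Vη →
      Disjoint (closure Vξ) (closure Vη) →
      ∃ K : Set E, IsCompact K ∧ K ⊆ M ∧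
        ∀ a b : ℝ, ∀ γ : ℝ → E, IsAlmostGeodesic M κ a b γ →
          γ a ∈ Vξ ∩ M → γ b ∈ Vη ∩ M → ∃ t ∈ Icc a b, γ t ∈ K

/-- A model domain `𝒟 ⊂ ℂ`: a bounded open subset of the right half-plane, symmetric
about `ℝ`, bounded by a Jordan curve through `0`, whose normalized Riemann map `g` onto
`𝔻` (with `g(𝒟 ∩ ℝ) = (-1,1)` and `g(0) = 1`) satisfies
`lim_{𝒟 ∋ ζ → 0} (g(ζ) - 1)/ζ` exists and is nonzero. -/
def ModelDomain (𝒟 : Set ℂ) : Prop :=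
  IsOpen 𝒟 ∧ Bornology.IsBounded 𝒟 ∧ 𝒟.Nonempty ∧
  (∀ ζ ∈ 𝒟, 0 < ζ.re) ∧
  (∀ ζ : ℂ, ζ ∈ 𝒟 ↔ (starRingEnd ℂ) ζ ∈ 𝒟) ∧
  (0 : ℂ) ∈ frontier 𝒟 ∧
  (∃ γ : AddCircle (1 : ℝ) → ℂ, Continuous γ ∧ Function.Injective γ ∧
     range γ = frontier 𝒟) ∧
  ∃ g : ℂ → ℂ, DifferentiableOn ℂ g 𝒟 ∧ BijOn g 𝒟 (ball (0 : ℂ) 1) ∧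
    g '' (𝒟 ∩ {ζ : ℂ | ζ.im = 0}) = {ζ : ℂ | ζ.im = 0 ∧ -1 < ζ.re ∧ ζ.re < 1} ∧
    ContinuousOn g (𝒟 ∪ {0}) ∧ g 0 = 1 ∧
    ∃ L : ℂ, L ≠ 0 ∧ Tendsto (fun ζ => (g ζ - 1) / ζ) (𝓝[𝒟] 0) (𝓝 L)

/-- The set whose supremum defines `M_Ω(r)` in the definition of a Goldilocks domain. -/
def goldiSet (M : Set E) (r : ℝ) : Set ℝ :=
  {t : ℝ | ∃ w ∈ M, ∃ v : E, delta M w ≤ r ∧ ‖v‖ = 1 ∧ t = (kobMetric M w v)⁻¹}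

/-- The Laplacian of a function `g : ℂ → ℝ` (so that `Δg = 4 ∂²g/∂w∂w̄`). -/
def laplacian2 (g : ℂ → ℝ) (w : ℂ) : ℝ :=
  fderiv ℝ (fun z => fderiv ℝ g z 1) w 1 + fderiv ℝ (fun z => fderiv ℝ g z Complex.I) w Complex.I

open Complex ComplexConjugate in
theorem norm_deriv_le_two_mul_re_of_re_pos {h : ℂ → ℂ} (hd : DifferentiableOn ℂ h (ball 0 1))
    (hre : ∀ ζ ∈ ball (0 : ℂ) 1, 0 < (h ζ).re) :
    ‖deriv h 0‖ ≤ 2 * (h 0).re := by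
  have h0 : (0 : ℂ) ∈ ball (0 : ℂ) 1 := mem_ball_self one_pos
  set a := h 0
  have ha : 0 < a.re := hre 0 h0
  -- the Cayley-type map `(h - a) / (h + conj a)` sends the right half-plane into the disc
  set ψ : ℂ → ℂ := fun ζ => (h ζ - a) / (h ζ + conj a)
  have hden : ∀ ζ ∈ ball (0 : ℂ) 1, h ζ + conj a ≠ 0 := fun ζ hζ hc => by
    have := congrArg re hc
    simp only [add_re, conj_re, zero_re] at this
    linarith [hre ζ hζ]
  have hψ : DifferentiableOn ℂ ψ (ball 0 1) :=
    (hd.sub_const a).div (hd.add_const _) hden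
  have hψmaps : MapsTo ψ (ball 0 1) (closedBall (ψ 0) 1) := fun ζ hζ => by
    have hx := hre ζ hζ
    have hsq : ‖h ζ - a‖ ^ 2 ≤ ‖h ζ + conj a‖ ^ 2 := by
      simp only [Complex.sq_norm, normSq_apply, sub_re, sub_im, add_re, add_im, conj_re, conj_im]
      nlinarith
    rw [mem_closedBall_iff_norm, show ψ 0 = 0 by simp [ψ, a], sub_zero, norm_div]
    exact div_le_one_of_le₀ ((sq_le_sq₀ (norm_nonneg _) (norm_nonneg _)).mp hsq) (norm_nonneg _)
  have hψ' : deriv ψ 0 = deriv h 0 / (2 * a.re) := by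
    have hh := (hd.differentiableAt (isOpen_ball.mem_nhds h0)).hasDerivAt
    have hsum : a + conj a = 2 * (a.re : ℂ) := by
      apply Complex.ext <;> simp; ring
    have hre0 : (a.re : ℂ) ≠ 0 := by exact_mod_cast ha.ne'
    have hψd : HasDerivAt ψ _ 0 := (hh.sub_const a).div (hh.add_const _) (hden 0 h0)
    rw [hψd.deriv, sub_self, zero_mul, sub_zero, hsum]
    field_simp
  have hschwarz := Complex.norm_deriv_le_div_of_mapsTo_ball hψ hψmaps one_pos
  rw [hψ', norm_div, div_one, div_le_one (by simp; positivity)] at hschwarz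
  simpa [abs_of_pos ha] using hschwarz

theorem Convex.norm_le_two_mul_norm_of_deriv_eq_smul {F : Type*} [NormedAddCommGroup F]
    [NormedSpace ℂ F] {M : Set F} (hMo : IsOpen M) (hM : Convex ℝ M) {g : ℂ → F}
    (hg : DifferentiableOn ℂ g (ball 0 1)) (hgM : MapsTo g (ball 0 1) M) {u : F} {β ζ : ℂ}
    (hβ : deriv g 0 = β • u) (hζ : g 0 + ζ • u ∉ M) : ‖β‖ ≤ 2 * ‖ζ‖ := by
  -- A real functional separating `g 0 + ζ • u` from `M` is the real part of a complex one `ℓ`;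
  -- composing with `ℓ` turns `g` into a function with positive real part.
  obtain ⟨φ, hφ⟩ := geometric_hahn_banach_open_point hM hMo hζ
  set ℓ : StrongDual ℂ F := StrongDual.extendRCLike φ
  set h : ℂ → ℂ := fun z => ℓ (g 0 + ζ • u) - ℓ (g z)
  have hℓ : ∀ x, (ℓ x).re = φ x := StrongDual.re_extendRCLike_apply (𝕜 := ℂ) φ
  have hre : ∀ z ∈ ball (0 : ℂ) 1, 0 < (h z).re := fun z hz => by
    simp only [h, Complex.sub_re, hℓ]
    linarith [hφ _ (hgM hz)]
  have hh0 : h 0 = ζ * ℓ u := by simp [h]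
  have hh' : deriv h 0 = -(β * ℓ u) := by
    have hg0 := (hg.differentiableAt (isOpen_ball.mem_nhds (mem_ball_self one_pos))).hasDerivAt
    have hhd : HasDerivAt h _ 0 := (ℓ.hasFDerivAt.comp_hasDerivAt 0 hg0).const_sub _
    simp [hhd.deriv, hβ]
  have hhd : DifferentiableOn ℂ h (ball 0 1) :=
    (differentiableOn_const _).sub (ℓ.differentiable.comp_differentiableOn hg)
  have hcara := norm_deriv_le_two_mul_re_of_re_pos hhd hre
  have hℓu : 0 < ‖ℓ u‖ := norm_pos_iff.mpr fun h0 => by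
    simpa [hh0, h0] using hre 0 (mem_ball_self one_pos)
  rw [hh', norm_neg, norm_mul, hh0] at hcara
  have := hcara.trans (mul_le_mul_of_nonneg_left (Complex.re_le_norm _) zero_le_two)
  rw [norm_mul, ← mul_assoc] at this
  exact le_of_mul_le_mul_right this hℓu

theorem dirDist_nonneg (M : Set E) (z v : E) : 0 ≤ dirDist M z v :=
  Real.sSup_nonneg fun _ hr => hr.1.le

theorem le_dirDist {M : Set E} (hM : Bornology.IsBounded M) {z v : E} (hv : v ≠ 0) {r : ℝ}
    (hr : 0 < r) (h : ∀ ζ : ℂ, ‖ζ‖ < r → z + ζ • (‖v‖⁻¹ • v) ∈ M) : r ≤ dirDist M z v := by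
  obtain ⟨R, hR⟩ := (isBounded_iff_subset_closedBall z).mp hM
  have hu : ‖‖v‖⁻¹ • v‖ = 1 := norm_smul_inv_norm (𝕜 := ℝ) hv
  refine le_csSup ⟨2 * R, fun r' ⟨hr', h'⟩ => ?_⟩ ⟨hr, h⟩
  have hmid := hR (h' ((r' / 2 : ℝ) : ℂ) (by simp [abs_of_pos hr']; linarith))
  rw [mem_closedBall, dist_eq_norm, add_sub_cancel_left, norm_smul, hu, mul_one,
    Complex.norm_real, Real.norm_of_nonneg (by positivity)] at hmid
  linarith

theorem dirDist_pos {M : Set E} (hMo : IsOpen M) (hM : Bornology.IsBounded M) {z v : E}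
    (hz : z ∈ M) (hv : v ≠ 0) : 0 < dirDist M z v := by
  obtain ⟨r, hr, hrM⟩ := Metric.isOpen_iff.mp hMo z hz
  have hu : ‖‖v‖⁻¹ • v‖ = 1 := norm_smul_inv_norm (𝕜 := ℝ) hv
  refine hr.trans_le (le_dirDist hM hv hr fun ζ hζ => hrM ?_)
  rwa [mem_ball, dist_eq_norm, add_sub_cancel_left, norm_smul, hu, mul_one]

theorem Convex.norm_le_two_mul_dirDist {M : Set E} (hMo : IsOpen M) (hM : Convex ℝ M)
    (hMb : Bornology.IsBounded M) {g : ℂ → E} (hg : DifferentiableOn ℂ g (ball 0 1))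
    (hgM : MapsTo g (ball 0 1) M) {v : E} (hv : v ≠ 0) {β : ℂ}
    (hβ : deriv g 0 = β • (‖v‖⁻¹ • v)) : ‖β‖ ≤ 2 * dirDist M (g 0) v := by
  by_contra! hlt
  have hr : 0 < ‖β‖ / 2 := by linarith [dirDist_nonneg M (g 0) v]
  have := le_dirDist hMb hv hr fun ζ hζ => by
    by_contra hout
    linarith [Convex.norm_le_two_mul_norm_of_deriv_eq_smul hMo hM hg hgM hβ hout]
  linarith

theorem kobMetric_nonneg (D : Set E) (z v : E) : 0 ≤ kobMetric D z v :=
  Real.sInf_nonneg fun _ ⟨α, hr, _⟩ => hr ▸ norm_nonneg α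

theorem kobMetric_le {D : Set E} {f : ℂ → E} (hf : DifferentiableOn ℂ f (ball 0 1))
    (hfD : MapsTo f (ball 0 1) D) (α : ℂ) : kobMetric D (f 0) (α • deriv f 0) ≤ ‖α‖ :=
  csInf_le ⟨0, fun _ ⟨β, hr, _⟩ => hr ▸ norm_nonneg β⟩ ⟨α, rfl, f, hf, hfD, rfl, rfl⟩

theorem le_kobMetric {D : Set E} (hD : IsOpen D) {z : E} (hz : z ∈ D) {v : E} {c : ℝ}
    (h : ∀ (α : ℂ) (f : ℂ → E), DifferentiableOn ℂ f (ball 0 1) → MapsTo f (ball 0 1) D →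
      f 0 = z → α • deriv f 0 = v → c ≤ ‖α‖) :
    c ≤ kobMetric D z v := by
  obtain ⟨t, ht, htD⟩ := Metric.isOpen_iff.mp hD z hz
  -- the infimum is over a nonempty set: the straight disc `ζ ↦ z + ζ • a • v` lies in `D`
  set a : ℂ := ((t / (‖v‖ + 1) : ℝ) : ℂ)
  have ha : a ≠ 0 := Complex.ofReal_ne_zero.mpr (by positivity)
  have hav : ‖a‖ * ‖v‖ < t := by
    rw [Complex.norm_real, Real.norm_of_nonneg (by positivity), div_mul_eq_mul_div,
      div_lt_iff₀ (by positivity)]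
    nlinarith
  have hderiv : deriv (fun ζ : ℂ => z + ζ • a • v) 0 = a • v := by
    simpa using (((hasDerivAt_id (0 : ℂ)).smul_const (a • v)).const_add z).deriv
  refine le_csInf ⟨_, a⁻¹, rfl, fun ζ => z + ζ • a • v, by fun_prop, fun ζ hζ => htD ?_,
    by simp, by rw [hderiv, smul_smul, inv_mul_cancel₀ ha, one_smul]⟩ ?_
  · rw [mem_ball, dist_eq_norm, add_sub_cancel_left, norm_smul, norm_smul, ← mul_assoc]
    rw [mem_ball_zero_iff] at hζ
    nlinarith [norm_nonneg ζ, norm_nonneg a, norm_nonneg v]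
  · rintro r ⟨α, rfl, f, hf, hfD, hf0, hfv⟩
    exact h α f hf hfD hf0 hfv

theorem Convex.norm_le_two_mul_dirDist_mul_kobMetric {M : Set E} (hMo : IsOpen M)
    (hM : Convex ℝ M) (hMb : Bornology.IsBounded M) {w : E} (hw : w ∈ M) {v : E} (hv : v ≠ 0) :
    ‖v‖ ≤ 2 * dirDist M w v * kobMetric M w v := by
  have hd := dirDist_pos hMo hMb hw hv
  rw [← div_le_iff₀' (by positivity)]
  refine le_kobMetric hMo hw fun α f hf hfM hf0 hfv => ?_
  have hα : α ≠ 0 := by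
    rintro rfl
    exact hv (by simpa using hfv.symm)
  have hderiv : deriv f 0 = (α⁻¹ * ‖v‖) • (‖v‖⁻¹ • v) := by
    rw [mul_smul, Complex.coe_smul, smul_inv_smul₀ (norm_ne_zero_iff.mpr hv), ← hfv,
      inv_smul_smul₀ hα]
  have hβ := Convex.norm_le_two_mul_dirDist hMo hM hMb hf hfM hv hderiv
  rw [hf0, norm_mul, norm_inv, Complex.norm_real, norm_norm, inv_mul_le_iff₀ (norm_pos_iff.mpr hα)] at hβ
  rw [div_le_iff₀ (by positivity)]
  linarith

theorem mul_kobMetric_inter_le {Ω U : Set E} (hΩ : IsOpen Ω) {w : E} (hw : w ∈ Ω) {r R : ℝ}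
    (hr : 0 < r) (hrR : r ≤ R) (hΩR : Ω ⊆ closedBall w R) (hU : closedBall w r ⊆ U) (v : E) :
    r / R * kobMetric (U ∩ Ω) w v ≤ kobMetric Ω w v := by
  have hR : 0 < R := hr.trans_le hrR
  set s := r / R
  have hs : 0 < s := div_pos hr hR
  refine le_kobMetric hΩ hw fun α f hf hfΩ hf0 hfv => ?_
  have hsζ : ∀ ζ : ℂ, ‖(s : ℂ) * ζ‖ = s * ‖ζ‖ := fun ζ => by
    rw [norm_mul, Complex.norm_real, Real.norm_of_nonneg hs.le]
  have hsball : MapsTo (fun ζ : ℂ => (s : ℂ) * ζ) (ball 0 1) (ball 0 1) := fun ζ hζ => by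
    rw [mem_ball_zero_iff] at hζ ⊢
    rw [hsζ]
    nlinarith [div_le_one_of_le₀ hrR hR.le, norm_nonneg ζ]
  set g : ℂ → E := fun ζ => f (s * ζ)
  have hg : DifferentiableOn ℂ g (ball 0 1) := hf.comp (by fun_prop) hsball
  have hgU : MapsTo g (ball 0 1) (U ∩ Ω) := fun ζ hζ => by
    refine ⟨hU ?_, hfΩ (hsball hζ)⟩
    have hfR : MapsTo f (ball 0 1) (closedBall (f 0) R) := by
      rw [hf0]
      exact hfΩ.mono_right hΩR
    have hschwarz := Complex.dist_le_div_mul_dist_of_mapsTo_ball hf hfR (hsball hζ)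
    rw [dist_zero_right, hsζ, div_one, hf0] at hschwarz
    rw [mem_closedBall]
    calc dist (g ζ) w ≤ R * (s * ‖ζ‖) := hschwarz
      _ ≤ R * s := by gcongr; nlinarith [mem_ball_zero_iff.mp hζ]
      _ = r := mul_div_cancel₀ r hR.ne'
  have hg0 : g 0 = w := by simp [g, hf0]
  have hgv : (α / s) • deriv g 0 = v := by
    rw [deriv_comp_mul_left, mul_zero, smul_smul, div_mul_cancel₀ _ (by exact_mod_cast hs.ne'),
      hfv]
  have hk := kobMetric_le hg hgU (α / s)
  rw [hg0, hgv, norm_div, Complex.norm_real, Real.norm_of_nonneg hs.le, le_div_iff₀ hs] at hk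
  linarith

theorem delta_pos {F : Type*} [NormedAddCommGroup F] {D : Set F} (hD : IsOpen D) {z : F}
    (hz : z ∈ D) (hDc : Dᶜ.Nonempty) : 0 < delta D z :=
  (hD.isClosed_compl.notMem_iff_infDist_pos hDc).mp (by simpa using hz)

theorem delta_mono {F : Type*} [NormedAddCommGroup F] {D D' : Set F} (h : D ⊆ D')
    (hD' : D'ᶜ.Nonempty) (z : F) : delta D z ≤ delta D' z :=
  infDist_le_infDist_of_subset (compl_subset_compl.mpr h) hD'

theorem mul_log_one_div_rpow_le {a b p d C : ℝ} (ha : 0 < a) (hab : a ≤ b) (hb : b < 1)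
    (hp : 0 ≤ p) (hd : 0 ≤ d) (hdC : d ≤ C / |Real.log a| ^ p) :
    d * Real.log (1 / b) ^ p ≤ C := by
  have hloga := Real.log_neg ha (hab.trans_lt hb)
  have hlog : Real.log (1 / b) ≤ |Real.log a| := by
    rw [one_div, Real.log_inv, abs_of_neg hloga]
    exact neg_le_neg (Real.log_le_log ha hab)
  have hlogb : 0 ≤ Real.log (1 / b) := Real.log_nonneg (one_le_one_div (ha.trans_le hab) hb.le)
  calc d * Real.log (1 / b) ^ p ≤ C / |Real.log a| ^ p * |Real.log a| ^ p :=
        mul_le_mul hdC (Real.rpow_le_rpow hlogb hlog hp) (by positivity) (hd.trans hdC)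
    _ = C := div_mul_cancel₀ C (Real.rpow_pos_of_pos (abs_pos.mpr hloga.ne) p).ne'

theorem kobayashi_metric_lower_bound_LTC_general {n : ℕ} (Ω : Set (Cn n))
    (hΩo : IsOpen Ω) (hΩb : Bornology.IsBounded Ω)
    (q : Cn n) (hq : q ∈ frontier Ω)
    (𝒪 : Set (Cn n)) (h𝒪o : IsOpen 𝒪) (hq𝒪 : q ∈ 𝒪)
    (hltc : LogTypeConvex (𝒪 ∩ Ω)) :
    ∃ W : Set (Cn n), IsOpen W ∧ q ∈ W ∧ IsCompact (closure W) ∧ closure W ⊆ 𝒪 ∧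
      ∃ c : ℝ, 0 < c ∧ ∃ ν : ℝ, 0 < ν ∧
        ∀ w ∈ W ∩ Ω, ∀ v : Cn n,
          c * ‖v‖ * Real.log (1 / delta Ω w) ^ (1 + ν) ≤ kobMetric Ω w v := by
  obtain ⟨hMb, hMconv, -, C, hC, ν, hν, hLTC⟩ := hltc
  have hMo : IsOpen (𝒪 ∩ Ω) := h𝒪o.inter hΩo
  have hqΩ : q ∉ Ω := (hΩo.frontier_eq ▸ hq).2
  obtain ⟨ρ, hρ, hρ𝒪⟩ := Metric.isOpen_iff.mp h𝒪o q hq𝒪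
  set r := min (ρ / 2) 1
  have hr : 0 < r := by positivity
  set R := diam Ω + r
  refine ⟨ball q r, isOpen_ball, mem_ball_self hr, isBounded_ball.isCompact_closure,
    closure_ball_subset_closedBall.trans ((closedBall_subset_ball ((min_le_left _ _).trans_lt (half_lt_self hρ))).trans hρ𝒪),
    r / R / (2 * C), by positivity, ν, hν, ?_⟩
  rintro w ⟨hwq, hwΩ⟩ v
  rcases eq_or_ne v 0 with rfl | hv
  · simpa using kobMetric_nonneg Ω w 0
  have hwU : closedBall w r ⊆ 𝒪 := (closedBall_subset_ball' (by linarith [mem_ball.mp hwq, min_le_left (ρ / 2) 1])).trans hρ𝒪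
  have hwM : w ∈ 𝒪 ∩ Ω := ⟨hwU (mem_closedBall_self hr.le), hwΩ⟩
  have hloc := mul_kobMetric_inter_le hΩo hwΩ hr (le_add_of_nonneg_left diam_nonneg)
    (fun x hx => (dist_le_diam_of_mem hΩb hx hwΩ).trans (le_add_of_nonneg_right hr.le)) hwU v
  have hconv := Convex.norm_le_two_mul_dirDist_mul_kobMetric hMo hMconv hMb hwM hv
  have hδ1 : delta Ω w < 1 :=
    (infDist_le_dist_of_mem hqΩ).trans_lt (hwq.trans_le (min_le_right _ _))
  have hdL := mul_log_one_div_rpow_le (delta_pos hMo hwM ⟨q, fun h => hqΩ h.2⟩)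
    (delta_mono inter_subset_right ⟨q, hqΩ⟩ w) hδ1 (by positivity) (dirDist_nonneg _ _ _)
    (hLTC w hwM v hv)
  have hL : 0 ≤ Real.log (1 / delta Ω w) ^ (1 + ν) := Real.rpow_nonneg (Real.log_nonneg
    (one_le_one_div (delta_pos hΩo hwΩ ⟨q, hqΩ⟩) hδ1.le)) _
  have hk := kobMetric_nonneg (𝒪 ∩ Ω) w v
  have hvL : ‖v‖ * Real.log (1 / delta Ω w) ^ (1 + ν) ≤ 2 * C * kobMetric (𝒪 ∩ Ω) w v := by
    linarith [mul_le_mul_of_nonneg_right hconv hL, mul_le_mul_of_nonneg_left hdL hk]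
  calc r / R / (2 * C) * ‖v‖ * Real.log (1 / delta Ω w) ^ (1 + ν)
      ≤ r / R / (2 * C) * (2 * C * kobMetric (𝒪 ∩ Ω) w v) := by
        rw [mul_assoc]; gcongr
    _ = r / R * kobMetric (𝒪 ∩ Ω) w v := by field_simp
    _ ≤ kobMetric Ω w v := hloc

/-- Lemma 5.3 of the paper. A lower bound for the Kobayashi metric
near a locally log-type convex boundary point. -/
theorem kobayashi_metric_lower_bound_LTC {n : ℕ} (hn : 2 ≤ n) (Ω : Set (Cn n))
    (hΩo : IsOpen Ω) (hΩc : IsConnected Ω) (hΩb : Bornology.IsBounded Ω)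
    (q : Cn n) (hq : q ∈ frontier Ω)
    (𝒪 : Set (Cn n)) (h𝒪o : IsOpen 𝒪) (hq𝒪 : q ∈ 𝒪)
    (hltc : LogTypeConvex (𝒪 ∩ Ω)) :
    ∃ W : Set (Cn n), IsOpen W ∧ q ∈ W ∧ IsCompact (closure W) ∧ closure W ⊆ 𝒪 ∧
      ∃ c : ℝ, 0 < c ∧ ∃ ν : ℝ, 0 < ν ∧
        ∀ w ∈ W ∩ Ω, ∀ v : Cn n,
          c * ‖v‖ * Real.log (1 / delta Ω w) ^ (1 + ν) ≤ kobMetric Ω w v :=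
  kobayashi_metric_lower_bound_LTC_general Ω hΩo hΩb q hq 𝒪 h𝒪o hq𝒪 hltc

end Paper
end
end

section
/- Let Ω := {(z,w) ∈ ℂ² : |z| + |w| < 1}. There exists δ > 0 such that for every (z,w) ∈ B²((1,0),δ) ∩ Ω, δ_Ω(z,w) = (1 − |z| − |w|)/√2. -/
/-
Common definitions for formalizing results from
"Local continuous extension of proper holomorphic maps: low-regularity and
infinite-type boundaries" (A. Banik).
-/

open Metric Set Filter MeasureTheory
open scoped Real ENNReal ComplexInnerProductSpace Topology

noncomputable section

/-! In each coordinate only the modulus matters, so pushing every coordinate of `p` radially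
outwards by the same amount `t = (r - ∑ ‖pᵢ‖) / n` reaches the complement of the
`ℓ¹`-ball at Euclidean distance `√n · t`; conversely, for any `q` outside the ball
Cauchy–Schwarz gives `r - ∑ ‖pᵢ‖ ≤ ∑ ‖qᵢ - pᵢ‖ ≤ √n · ‖q - p‖`. -/

section

variable {F : Type*} [NormedAddCommGroup F] [NormedSpace ℝ F] [Nontrivial F]

theorem exists_unit_smul_eq_norm_smul (c : F) : ∃ u : F, ‖u‖ = 1 ∧ c = ‖c‖ • u := by
  rcases eq_or_ne c 0 with rfl | hc
  · obtain ⟨u, hu⟩ := exists_norm_eq F zero_le_one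
    exact ⟨u, hu, by simp⟩
  · exact ⟨‖c‖⁻¹ • c, by simp [norm_smul, hc], by simp [smul_smul, hc]⟩

theorem exists_dist_eq_and_norm_eq_norm_add (c : F) {t : ℝ} (ht : 0 ≤ t) :
    ∃ d : F, dist c d = t ∧ ‖d‖ = ‖c‖ + t := by
  obtain ⟨u, hu, hcu⟩ := exists_unit_smul_eq_norm_smul c
  refine ⟨(‖c‖ + t) • u, ?_, ?_⟩
  · have hdc : (‖c‖ + t) • u - c = t • u := by rw [add_smul, ← hcu, add_sub_cancel_left]
    rw [dist_comm, dist_eq_norm, hdc, norm_smul, hu, mul_one, Real.norm_of_nonneg ht]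
  · rw [norm_smul, hu, mul_one, Real.norm_of_nonneg (by positivity)]

end

section

variable {𝕜 ι : Type*} [RCLike 𝕜] [Fintype ι]

theorem EuclideanSpace.sum_norm_sub_sum_norm_le (p q : EuclideanSpace 𝕜 ι) :
    ∑ i, ‖q i‖ - ∑ i, ‖p i‖ ≤ √(Fintype.card ι) * dist p q := by
  calc ∑ i, ‖q i‖ - ∑ i, ‖p i‖ = ∑ i, (‖q i‖ - ‖p i‖) := (Finset.sum_sub_distrib ..).symm
    _ ≤ ∑ i, dist (p i) (q i) := by
        gcongr with i
        rw [dist_comm, dist_eq_norm]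
        exact norm_sub_norm_le _ _
    _ ≤ √(Fintype.card ι * ∑ i, dist (p i) (q i) ^ 2) :=
        Real.le_sqrt_of_sq_le (sq_sum_le_card_mul_sum_sq ..)
    _ = √(Fintype.card ι) * dist p q := by
        rw [Real.sqrt_mul (Nat.cast_nonneg _), EuclideanSpace.dist_eq]

theorem EuclideanSpace.infDist_compl_sum_norm_lt [Nonempty ι] {r : ℝ}
    (p : EuclideanSpace 𝕜 ι) (hp : ∑ i, ‖p i‖ ≤ r) :
    infDist p {q : EuclideanSpace 𝕜 ι | ∑ i, ‖q i‖ < r}ᶜ =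
      (r - ∑ i, ‖p i‖) / √(Fintype.card ι) := by
  set n : ℝ := (Fintype.card ι : ℝ)
  have hn : 0 < n := Nat.cast_pos.mpr Fintype.card_pos
  have hsqrt : 0 < √n := Real.sqrt_pos.mpr hn
  set t := (r - ∑ i, ‖p i‖) / n
  have ht : 0 ≤ t := div_nonneg (sub_nonneg.mpr hp) hn.le
  choose d hd_dist hd_norm using fun i => exists_dist_eq_and_norm_eq_norm_add (p i) ht
  set q : EuclideanSpace 𝕜 ι := WithLp.toLp 2 d
  have hq : q ∈ {q : EuclideanSpace 𝕜 ι | ∑ i, ‖q i‖ < r}ᶜ := by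
    simp only [Set.mem_compl_iff, Set.mem_ofPred_eq, not_lt, q, hd_norm,
      Finset.sum_add_distrib, Finset.sum_const, Finset.card_univ, nsmul_eq_mul]
    rw [mul_div_cancel₀ _ hn.ne', add_sub_cancel]
  have hpq : dist p q = (r - ∑ i, ‖p i‖) / √n := by
    rw [EuclideanSpace.dist_eq]
    simp only [q, hd_dist, Finset.sum_const, Finset.card_univ, nsmul_eq_mul]
    rw [Real.sqrt_mul hn.le, Real.sqrt_sq ht, eq_div_iff hsqrt.ne', mul_right_comm,
      Real.mul_self_sqrt hn.le, mul_div_cancel₀ _ hn.ne']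
  refine le_antisymm (hpq ▸ infDist_le_dist_of_mem hq) ((le_infDist ⟨q, hq⟩).mpr ?_)
  intro y hy
  simp only [Set.mem_compl_iff, Set.mem_ofPred_eq, not_lt] at hy
  rw [div_le_iff₀' hsqrt]
  linarith [EuclideanSpace.sum_norm_sub_sum_norm_le p y]

end

namespace Paper

/-- Equation (2.4) of the paper. The boundary distance of
`Ω = {|z| + |w| < 1}` near the point `(1,0)`. -/
theorem example_boundary_distance :
    ∃ δ : ℝ, 0 < δ ∧
      ∀ p : Cn 2,
        p ∈ ball (EuclideanSpace.single (0 : Fin 2) (1 : ℂ)) δ →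
        ‖p 0‖ + ‖p 1‖ < 1 →
        delta {q : Cn 2 | ‖q 0‖ + ‖q 1‖ < 1} p =
          (1 - ‖p 0‖ - ‖p 1‖) / Real.sqrt 2 := by
  refine ⟨1, one_pos, fun p _ hp => ?_⟩
  have h := EuclideanSpace.infDist_compl_sum_norm_lt (r := 1) p
    (by simpa only [Fin.sum_univ_two] using hp.le)
  simpa only [delta, Fin.sum_univ_two, Fintype.card_fin, Nat.cast_ofNat, sub_sub] using h

end Paper
end
end

section
/- Let Ω := {(z,w) ∈ ℂ² : |z| + |w| < 1}. There exist δ > 0 and a constant c̃ > 0 such that k_Ω((z,w);v) ≥ ‖v‖ / (c̃ (δ_Ω(z,w))^{1/2}) for all (z,w) ∈ B²((1,0),δ) ∩ Ω and all v ∈ ℂ². -/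
/-
Common definitions for formalizing results from
"Local continuous extension of proper holomorphic maps: low-regularity and
infinite-type boundaries" (A. Banik).
-/

open Metric Set Filter MeasureTheory
open scoped Real ENNReal ComplexInnerProductSpace Topology

noncomputable section

namespace Paper

variable {E : Type*} [NormedAddCommGroup E] [InnerProductSpace ℂ E]

/-!
For unimodular `λ, μ` the affine function `1 - λ z - μ w` has positive real part on `Ω`, so for a
holomorphic disc `f` in `Ω` with `f(0) = p`, the Schwarz lemma (after a Möbius map of the half-plane
onto the disc) gives `|λ f₀'(0) + μ f₁'(0)| ≤ 2 (1 - Re (λ p₀ + μ p₁))`. Taking for `λ, μ` the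
conjugate phases of `p₀, p₁` rotated by `e^{±iθ}`, the right side is `2 (1 - cos θ (1 - t))` with
`t = 1 - |p₀| - |p₁|`; comparing `θ = √t` with `θ = -√t` shows that both components of `f'(0)`
are `O(√t)`. Finally `t ≤ 2 δ_Ω(p)`.
-/

theorem norm_deriv_le_two_mul_div_of_re_le {h : ℂ → ℂ} {M R : ℝ} (hM : 0 < M) (hR : 0 < R)
    (hd : DifferentiableOn ℂ h (ball 0 R)) (hre : MapsTo h (ball 0 R) {z | z.re ≤ M})
    (h0 : h 0 = 0) : ‖deriv h 0‖ ≤ 2 * M / R := by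
  set ψ : ℂ → ℂ := fun z => h z / (2 * M - h z)
  have hden : ∀ z ∈ ball (0 : ℂ) R, 2 * (M : ℂ) - h z ≠ 0 := fun z hz heq => by
    have hle : (h z).re ≤ M := hre hz
    have : 2 * M - (h z).re = 0 := by simpa using congrArg Complex.re heq
    linarith
  have hdψ : DifferentiableOn ℂ ψ (ball 0 R) := hd.div (hd.const_sub _) hden
  have hmaps : MapsTo ψ (ball 0 R) (closedBall (ψ 0) 1) := fun z hz => by
    have hle : (h z).re ≤ M := hre hz
    simp only [ψ, mem_closedBall, h0, sub_zero, zero_div, dist_zero_right, norm_div]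
    refine div_le_one_of_le₀ ?_ (norm_nonneg _)
    rw [← sq_le_sq₀ (norm_nonneg _) (norm_nonneg _), Complex.sq_norm, Complex.sq_norm]
    simp only [Complex.normSq_apply, Complex.sub_re, Complex.mul_re, Complex.re_ofNat,
      Complex.ofReal_re, Complex.im_ofNat, Complex.ofReal_im, mul_zero, sub_zero, Complex.sub_im,
      Complex.mul_im, zero_mul, add_zero, zero_sub, mul_neg, neg_mul, neg_neg, add_le_add_iff_right]
    nlinarith
  have hh : HasDerivAt h (deriv h 0) 0 :=
    (hd.differentiableAt (ball_mem_nhds 0 hR)).hasDerivAt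
  have hM0 : (M : ℂ) ≠ 0 := by exact_mod_cast hM.ne'
  have hψ' : HasDerivAt ψ _ 0 := hh.div (hh.const_sub _) (by simpa [h0] using hM0)
  have hderiv : deriv ψ 0 = deriv h 0 / (2 * M) := by
    rw [hψ'.deriv, h0]
    field_simp
    ring
  have hschwarz := Complex.norm_deriv_le_div_of_mapsTo_ball hdψ hmaps hR
  rw [hderiv, norm_div, div_le_div_iff₀ (norm_pos_iff.2 (mul_ne_zero two_ne_zero hM0)) hR]
    at hschwarz
  rw [le_div_iff₀ hR]
  simpa [abs_of_pos hM] using hschwarz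

theorem norm_map_deriv_le_of_re_lt_one {F : Type*} [NormedAddCommGroup F] [NormedSpace ℂ F]
    {f : ℂ → F} {R : ℝ} (ℓ : F →L[ℂ] ℂ) (hR : 0 < R) (hd : DifferentiableOn ℂ f (ball 0 R))
    (hℓ : ∀ z ∈ ball (0 : ℂ) R, (ℓ (f z)).re < 1) :
    ‖ℓ (deriv f 0)‖ ≤ 2 * (1 - (ℓ (f 0)).re) / R := by
  have hf : HasDerivAt f (deriv f 0) 0 :=
    (hd.differentiableAt (ball_mem_nhds 0 hR)).hasDerivAt
  have hℓf : HasDerivAt (fun z => ℓ (f z) - ℓ (f 0)) (ℓ (deriv f 0)) 0 :=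
    (ℓ.hasFDerivAt.comp_hasDerivAt 0 hf).sub_const _
  rw [← hℓf.deriv]
  refine norm_deriv_le_two_mul_div_of_re_le (by linarith [hℓ 0 (mem_ball_self hR)]) hR
    ((ℓ.differentiable.comp_differentiableOn hd).sub_const _) (fun z hz => ?_) (sub_self _)
  simp only [mem_ofPred_eq, Complex.sub_re]
  linarith [hℓ z hz]

theorem _root_.EuclideanSpace.norm_le_sum_norm {𝕜 ι : Type*} [RCLike 𝕜] [Fintype ι]
    (x : EuclideanSpace 𝕜 ι) : ‖x‖ ≤ ∑ i, ‖x i‖ := by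
  classical
  calc ‖x‖ = ‖∑ i, EuclideanSpace.single i (x i)‖ := by
        congr 1; ext j; simp
    _ ≤ ∑ i, ‖EuclideanSpace.single i (x i)‖ := norm_sum_le _ _
    _ = ∑ i, ‖x i‖ := by simp

theorem norm_add_norm_le_norm_add_add_norm_sub (a b : ℂ) : ‖a‖ + ‖b‖ ≤ ‖a + b‖ + ‖a - b‖ := by
  have ha := norm_add_le (a + b) (a - b)
  have hb := norm_sub_le (a + b) (a - b)
  rw [show a + b + (a - b) = 2 * a by ring, norm_mul, Complex.norm_two] at ha
  rw [show a + b - (a - b) = 2 * b by ring, norm_mul, Complex.norm_two] at hb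
  linarith

open Complex in
theorem norm_add_norm_le_of_forall_rotate {a b : ℂ} {t : ℝ} (ht0 : 0 < t) (ht1 : t ≤ 1)
    (h : ∀ θ : ℝ, ‖exp (θ * I) * a + exp (-θ * I) * b‖ ≤ 2 * (1 - Real.cos θ * (1 - t))) :
    ‖a‖ + ‖b‖ ≤ 7 * √t := by
  set s := √t
  have hs0 : 0 < s := Real.sqrt_pos.2 ht0
  have hs1 : s ≤ 1 := Real.sqrt_le_one.2 ht1
  have hst : s ^ 2 = t := Real.sq_sqrt ht0.le
  have hsum : ‖a + b‖ ≤ 2 * t := by simpa using h 0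
  have hcos : 1 - t / 2 ≤ Real.cos s := hst ▸ Real.one_sub_sq_div_two_le_cos
  have hrot : ∀ θ ∈ ({s, -s} : Set ℝ), ‖exp (θ * I) * a + exp (-θ * I) * b‖ ≤ 3 * t := by
    rintro θ (rfl | rfl) <;> refine (h _).trans ?_ <;>
      nlinarith [Real.cos_neg s, Real.cos_le_one s]
  -- rotating by `±s` and subtracting isolates `a - b`, with a factor `sin s ≈ √t`
  have hdiff : 2 * Real.sin s * ‖a - b‖ ≤ 6 * t := by
    have hid : (exp (s * I) * a + exp (-s * I) * b) - (exp (↑(-s) * I) * a + exp (-↑(-s) * I) * b)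
        = ↑(2 * Real.sin s) * I * (a - b) := by
      push_cast
      simp only [neg_neg, exp_mul_I, cos_neg, sin_neg]
      ring
    have hsin : 0 ≤ Real.sin s :=
      Real.sin_nonneg_of_nonneg_of_le_pi hs0.le (by linarith [Real.pi_gt_three])
    calc 2 * Real.sin s * ‖a - b‖ = ‖↑(2 * Real.sin s) * I * (a - b)‖ := by
          rw [norm_mul, norm_mul, norm_I, mul_one, norm_real, Real.norm_of_nonneg (by positivity)]
      _ ≤ 3 * t + 3 * t := by
          rw [← hid]
          exact (norm_sub_le _ _).trans (add_le_add (hrot s (by simp)) (hrot (-s) (by simp)))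
      _ = 6 * t := by ring
  have hsub : ‖a - b‖ ≤ 3 * π / 2 * s := by
    have hjordan := mul_le_mul_of_nonneg_right
      (Real.mul_le_sin hs0.le (by linarith [Real.pi_gt_three])) (norm_nonneg (a - b))
    have key : s * (4 / π * ‖a - b‖) ≤ s * (6 * s) := by
      linear_combination 2 * hjordan + hdiff - 6 * hst
    have := le_of_mul_le_mul_left key hs0
    rw [div_mul_eq_mul_div, div_le_iff₀ Real.pi_pos] at this
    linarith
  nlinarith [norm_add_norm_le_norm_add_add_norm_sub a b, Real.pi_lt_d2]

theorem exists_disc_of_mem_interior {D : Set E} {z : E} (hz : z ∈ interior D) (v : E) :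
    ∃ α : ℂ, ∃ f : ℂ → E, DifferentiableOn ℂ f (ball 0 1) ∧ MapsTo f (ball 0 1) D ∧
      f 0 = z ∧ α • deriv f 0 = v := by
  obtain ⟨r, hr, hball⟩ := Metric.mem_nhds_iff.1 (mem_interior_iff_mem_nhds.1 hz)
  set ε : ℝ := r / (‖v‖ + 1)
  have hε : 0 < ε := by positivity
  have hεv : ε * ‖v‖ < r := by
    rw [div_mul_eq_mul_div, div_lt_iff₀ (by positivity)]
    linarith
  have hdisc : HasDerivAt (fun ζ : ℂ => z + ζ • (ε : ℂ) • v) ((ε : ℂ) • v) 0 := by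
    simpa using ((hasDerivAt_id (0 : ℂ)).smul_const ((ε : ℂ) • v)).const_add z
  refine ⟨(ε : ℂ)⁻¹, fun ζ => z + ζ • (ε : ℂ) • v,
    (Differentiable.differentiableOn (by fun_prop)), fun ζ hζ => hball ?_, by simp, ?_⟩
  · rw [mem_ball_zero_iff] at hζ
    rw [mem_ball, dist_self_add_left, norm_smul, norm_smul, Complex.norm_real,
      Real.norm_of_nonneg hε.le]
    nlinarith [norm_nonneg v, norm_nonneg ζ]
  · rw [hdisc.deriv, smul_smul, inv_mul_cancel₀ (by exact_mod_cast hε.ne'), one_smul]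

theorem div_le_kobMetric {D : Set E} {z : E} {M : ℝ} (hz : z ∈ interior D) (hM : 0 ≤ M)
    (hbound : ∀ f : ℂ → E, DifferentiableOn ℂ f (ball 0 1) → MapsTo f (ball 0 1) D →
      f 0 = z → ‖deriv f 0‖ ≤ M) (v : E) :
    ‖v‖ / M ≤ kobMetric D z v := by
  obtain ⟨α, f, hd, hf, hf0, hv⟩ := exists_disc_of_mem_interior hz v
  refine le_csInf ⟨‖α‖, α, rfl, f, hd, hf, hf0, hv⟩ ?_
  rintro _ ⟨β, rfl, g, hgd, hg, hg0, rfl⟩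
  refine div_le_of_le_mul₀ hM (norm_nonneg β) ?_
  rw [norm_smul]
  exact mul_le_mul_of_nonneg_left (hbound g hgd hg hg0) (norm_nonneg β)

open Complex in
theorem norm_deriv_le_of_mapsTo_l1Ball {f : ℂ → Cn 2} (hd : DifferentiableOn ℂ f (ball 0 1))
    (hf : MapsTo f (ball 0 1) {q : Cn 2 | ‖q 0‖ + ‖q 1‖ < 1}) :
    ‖deriv f 0‖ ≤ 7 * √(1 - ‖f 0 0‖ - ‖f 0 1‖) := by
  set p := f 0
  set W := deriv f 0
  have hp : ‖p 0‖ + ‖p 1‖ < 1 := hf (mem_ball_self one_pos)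
  set u : Fin 2 → ℂ := fun i => exp (-(arg (p i) : ℂ) * I)
  have hu : ∀ i, ‖u i‖ = 1 := fun i => by simp [u, ← ofReal_neg, norm_exp_ofReal_mul_I]
  have hup : ∀ i, u i * p i = ‖p i‖ := fun i => by
    nth_rw 1 [← norm_mul_exp_arg_mul_I (p i)]
    rw [mul_left_comm, ← exp_add, neg_mul, neg_add_cancel, exp_zero, mul_one]
  have hrot : ∀ θ : ℝ, ‖exp (θ * I) * (u 0 * W 0) + exp (-θ * I) * (u 1 * W 1)‖ ≤
      2 * (1 - Real.cos θ * (1 - (1 - ‖p 0‖ - ‖p 1‖))) := fun θ => by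
    set ℓ : Cn 2 →L[ℂ] ℂ := (exp (θ * I) * u 0) • EuclideanSpace.proj 0 +
      (exp (-θ * I) * u 1) • EuclideanSpace.proj 1
    have hℓ : ∀ q : Cn 2, ℓ q = exp (θ * I) * (u 0 * q 0) + exp (-θ * I) * (u 1 * q 1) :=
      fun q => by simp [ℓ, mul_assoc]
    have hℓΩ : ∀ q : Cn 2, (ℓ q).re ≤ ‖q 0‖ + ‖q 1‖ := fun q => by
      refine (re_le_norm _).trans ((norm_add_le _ _).trans (add_le_add ?_ ?_)) <;>
        simp [← ofReal_neg, norm_exp_ofReal_mul_I, hu]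
    have hℓp : (ℓ p).re = Real.cos θ * (‖p 0‖ + ‖p 1‖) := by
      simp only [hℓ, hup, add_re, re_mul_ofReal, ← ofReal_neg, exp_ofReal_mul_I_re, Real.cos_neg]
      ring
    have := norm_map_deriv_le_of_re_lt_one ℓ one_pos hd fun z hz => (hℓΩ _).trans_lt (hf hz)
    rw [hℓp, div_one, hℓ] at this
    convert this using 3
    ring
  calc ‖W‖ ≤ ‖W 0‖ + ‖W 1‖ := by simpa using EuclideanSpace.norm_le_sum_norm W
    _ = ‖u 0 * W 0‖ + ‖u 1 * W 1‖ := by simp [hu]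
    _ ≤ 7 * √(1 - ‖p 0‖ - ‖p 1‖) :=
        norm_add_norm_le_of_forall_rotate (by linarith)
          (by linarith [norm_nonneg (p 0), norm_nonneg (p 1)]) hrot

theorem one_sub_norm_sub_norm_le_two_mul_delta (p : Cn 2) :
    1 - ‖p 0‖ - ‖p 1‖ ≤ 2 * delta {q : Cn 2 | ‖q 0‖ + ‖q 1‖ < 1} p := by
  have hne : {q : Cn 2 | ‖q 0‖ + ‖q 1‖ < 1}ᶜ.Nonempty :=
    ⟨EuclideanSpace.single 0 1, by simp⟩
  have hcoord : ∀ q : Cn 2, ∀ i, ‖q i‖ - ‖p i‖ ≤ dist p q := fun q i =>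
    (norm_sub_norm_le _ _).trans ((dist_eq_norm (q i) (p i)).symm.le.trans
      ((dist_comm _ _).le.trans (PiLp.dist_apply_le p q i)))
  rw [← div_le_iff₀' two_pos, delta, le_infDist hne]
  intro q hq
  simp only [mem_compl_iff, mem_ofPred_eq, not_lt] at hq
  rw [div_le_iff₀' two_pos]
  linarith [hcoord q 0, hcoord q 1]

/-- Step 2 of Example 2.2 of the paper. A lower bound for the
Kobayashi metric of `Ω = {|z| + |w| < 1}` near `(1,0)`:
`k_Ω((z,w); v) ≥ ‖v‖ / (c̃ δ_Ω(z,w)^{1/2})`. -/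
theorem example_kobayashi_metric_bound :
    ∃ δ : ℝ, 0 < δ ∧ ∃ c : ℝ, 0 < c ∧
      ∀ p : Cn 2,
        p ∈ ball (EuclideanSpace.single (0 : Fin 2) (1 : ℂ)) δ →
        ‖p 0‖ + ‖p 1‖ < 1 →
        ∀ v : Cn 2,
          ‖v‖ / (c * Real.sqrt
              (delta {q : Cn 2 | ‖q 0‖ + ‖q 1‖ < 1} p)) ≤
            kobMetric {q : Cn 2 | ‖q 0‖ + ‖q 1‖ < 1} p v := by
  refine ⟨1, one_pos, 14, by norm_num, fun p _ hp v => ?_⟩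
  set Ω := {q : Cn 2 | ‖q 0‖ + ‖q 1‖ < 1}
  have ht := one_sub_norm_sub_norm_le_two_mul_delta p
  have hδ : 0 < delta Ω p := by linarith
  have hint : p ∈ interior Ω := mem_interior_iff_mem_nhds.2
    (mem_of_superset (ball_mem_nhds p hδ) ball_infDist_compl_subset)
  refine div_le_kobMetric hint (by positivity) (fun f hd hf hf0 => ?_) v
  calc ‖deriv f 0‖ ≤ 7 * √(1 - ‖p 0‖ - ‖p 1‖) := hf0 ▸ norm_deriv_le_of_mapsTo_l1Ball hd hf
    _ ≤ 7 * √(2 ^ 2 * delta Ω p) := by gcongr; linarith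
    _ = 14 * √(delta Ω p) := by
        rw [Real.sqrt_mul (by positivity), Real.sqrt_sq zero_le_two]
        ring

end Paper
end
end
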